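/- Let (q_k) be a sequence of nonnegative real numbers and c > 0 a constant with 2c < 1 such that q_k ≤ c(q_{k-1} + q_{k+1}) for all k ≥ 1, and suppose q_k → 0 as k → ∞. Then there exist constants C > 0 and δ > 0 (depending only on c and q_0) such that q_k ≤ C·e^{-δ k} for all k ≥ 0. -/

import Mathlib

/-!
Put `r = 2c`. Since `r ≤ 1`, the geometric sequence `A rᵏ` is a supersolution of the
comparison inequality, `c (r^(k-1) + r^(k+1)) ≤ rᵏ`, so `q k - A rᵏ` is a subsolution.
Choosing `A ≥ q 0` makes it nonpositive at `0`, and it tends to `0`; a discrete maximum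
principle then gives `q k ≤ A rᵏ = A e^{-δk}` with `δ = -log r`.
-/

open Filter Topology

/-- Discrete maximum principle. A positive value would force a positive global maximum
(the sequence tends to `0`), which at an interior point `m` contradicts
`f m ≤ c (f (m-1) + f (m+1)) ≤ 2c f m < f m`. -/
theorem nonpos_of_le_mul_add_of_tendsto_zero {f : ℕ → ℝ} {c : ℝ} (hc : 0 ≤ c)
    (hc2 : 2 * c < 1) (h0 : f 0 ≤ 0)
    (hrec : ∀ k, 1 ≤ k → f k ≤ c * (f (k - 1) + f (k + 1)))
    (hlim : Tendsto f atTop (𝓝 0)) (k : ℕ) : f k ≤ 0 := by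
  by_contra! hk
  have hfar : ∀ᶠ n in cocompact ℕ, f n ≤ f k := by
    rw [cocompact_eq_atTop]
    exact (hlim.eventually (ge_mem_nhds hk)).mono fun _ h => h
  obtain ⟨m, hmax⟩ := continuous_of_discreteTopology.exists_forall_ge' k hfar
  have hm_pos : 0 < f m := hk.trans_le (hmax k)
  obtain ⟨n, rfl⟩ : ∃ n, m = n + 1 :=
    Nat.exists_eq_add_one.mpr (Nat.pos_of_ne_zero fun h => by subst h; linarith)
  have hstep := hrec (n + 1) n.succ_pos
  rw [Nat.add_sub_cancel] at hstep
  nlinarith [hmax n, hmax (n + 1 + 1)]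

theorem mul_pow_pred_add_pow_succ_le {c r : ℝ} (hr : 0 ≤ r)
    (hcr : c * (1 + r ^ 2) ≤ r) {k : ℕ} (hk : 1 ≤ k) :
    c * (r ^ (k - 1) + r ^ (k + 1)) ≤ r ^ k := by
  obtain ⟨n, rfl⟩ := Nat.exists_eq_add_of_le' hk
  rw [Nat.add_sub_cancel]
  calc c * (r ^ n + r ^ (n + 1 + 1)) = r ^ n * (c * (1 + r ^ 2)) := by ring
    _ ≤ r ^ n * r := mul_le_mul_of_nonneg_left hcr (pow_nonneg hr n)
    _ = r ^ (n + 1) := (pow_succ r n).symm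

theorem le_mul_pow_of_le_mul_add_of_tendsto_zero {q : ℕ → ℝ} {c : ℝ} (hc : 0 ≤ c)
    (hc2 : 2 * c < 1) (hrec : ∀ k, 1 ≤ k → q k ≤ c * (q (k - 1) + q (k + 1)))
    (hlim : Tendsto q atTop (𝓝 0)) {A : ℝ} (hA0 : 0 ≤ A) (hA : q 0 ≤ A) (k : ℕ) :
    q k ≤ A * (2 * c) ^ k := by
  have hsuper : c * (1 + (2 * c) ^ 2) ≤ 2 * c := by nlinarith
  have hpow : Tendsto (fun n => A * (2 * c) ^ n) atTop (𝓝 0) := by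
    simpa using (tendsto_pow_atTop_nhds_zero_of_lt_one (by linarith) hc2).const_mul A
  have hdiff := nonpos_of_le_mul_add_of_tendsto_zero hc hc2
    (f := fun n => q n - A * (2 * c) ^ n) (by simpa using hA)
    (fun n hn => by
      linarith [hrec n hn, mul_le_mul_of_nonneg_left
        (mul_pow_pred_add_pow_succ_le (by linarith) hsuper hn) hA0])
    (by simpa using hlim.sub hpow)
  linarith [hdiff k]

theorem exp_decay_of_two_sided_estimate_general
    (q : ℕ → ℝ) (c : ℝ) (hc : 0 < c) (hc2 : 2 * c < 1)
    (hrec : ∀ k : ℕ, 1 ≤ k → q k ≤ c * (q (k - 1) + q (k + 1)))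
    (hlim : Filter.Tendsto q Filter.atTop (nhds 0)) :
    ∃ C > (0:ℝ), ∃ δ > (0:ℝ), ∀ k : ℕ, q k ≤ C * Real.exp (-δ * k) := by
  have hr : 0 < 2 * c := by positivity
  refine ⟨max (q 0) 1, by positivity, -Real.log (2 * c), neg_pos.mpr (Real.log_neg hr hc2),
    fun k => ?_⟩
  rw [neg_neg, Real.exp_mul, Real.exp_log hr, Real.rpow_natCast]
  exact le_mul_pow_of_le_mul_add_of_tendsto_zero hc.le hc2 hrec hlim (by positivity)
    (le_max_left _ _) k

/-- Abstract exponential-decay lemma: a nonnegative sequence satisfying the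
two-sided comparison `q k ≤ c (q (k-1) + q (k+1))` with `2c < 1` and tending
to zero decays exponentially. -/
theorem exp_decay_of_two_sided_estimate
    (q : ℕ → ℝ) (c : ℝ) (hq : ∀ k, 0 ≤ q k) (hc : 0 < c) (hc2 : 2 * c < 1)
    (hrec : ∀ k : ℕ, 1 ≤ k → q k ≤ c * (q (k - 1) + q (k + 1)))
    (hlim : Filter.Tendsto q Filter.atTop (nhds 0)) :
    ∃ C > (0:ℝ), ∃ δ > (0:ℝ), ∀ k : ℕ, q k ≤ C * Real.exp (-δ * k) :=
  exp_decay_of_two_sided_estimate_general q c hc hc2 hrec hlim
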